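/- arXiv:1707.05596 — 2 statements merged into one kernel-verified Lean document; each statement's English description precedes it below -/
import Mathlib

section
/- For any random variable X, min(F_X^{-1}(z), 0) = F_{-X^-}^{-1}(z) for all z in (0,1), where X^- = max(-X, 0) is the negative part of X. -/
open MeasureTheory

variable {Ω : Type*} [MeasurableSpace Ω]

/-- The cumulative distribution function of `X` under `μ`. -/
noncomputable def cdf (μ : Measure Ω) (X : Ω → ℝ) (x : ℝ) : ℝ :=
  (μ {ω | X ω ≤ x}).toReal

/-- The left-continuous quantile function `F_X^{-1}(t) = inf {x : F_X(x) ≥ t}`. -/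
noncomputable def qL (μ : Measure Ω) (X : Ω → ℝ) (t : ℝ) : ℝ :=
  sInf {x : ℝ | t ≤ cdf μ X x}

/-! Truncating `X` from above at `c` leaves its distribution function unchanged below `c` and
makes it `1` from `c` on, so the superlevel set `{x | z ≤ F(x)}` only gains `[c, ∞)`, and its
infimum becomes `min (F_X⁻¹ z) c`. Since `-X⁻ = min X 0`, the theorem is the case `c = 0`. -/

open Filter Set

namespace ProbabilityTheory

variable (ν : Measure ℝ) {z : ℝ}

lemma bddBelow_setOf_le_cdf (hz : 0 < z) : BddBelow {x | z ≤ cdf ν x} := by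
  obtain ⟨x₀, hx₀⟩ :=
    eventually_atBot.1 ((tendsto_cdf_atBot ν).eventually (eventually_lt_nhds hz))
  exact ⟨x₀, fun y hy => le_of_not_gt fun hlt => (hx₀ y hlt.le).not_ge hy⟩

lemma nonempty_setOf_le_cdf (hz : z < 1) : {x | z ≤ cdf ν x}.Nonempty :=
  ((tendsto_cdf_atTop ν).eventually (eventually_gt_nhds hz)).exists.imp fun _ => le_of_lt

end ProbabilityTheory

section

variable {μ : Measure Ω} {X : Ω → ℝ}

lemma cdf_eq_cdf_map [IsProbabilityMeasure μ] (hX : Measurable X) :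
    cdf μ X = ProbabilityTheory.cdf (μ.map X) := by
  have : IsProbabilityMeasure (μ.map X) := Measure.isProbabilityMeasure_map hX.aemeasurable
  funext x
  rw [ProbabilityTheory.cdf_eq_real, measureReal_def, Measure.map_apply hX measurableSet_Iic]
  rfl

lemma cdf_min_const_of_lt {c x : ℝ} (hx : x < c) :
    cdf μ (fun ω => min (X ω) c) x = cdf μ X x := by
  simp only [cdf, min_le_iff, not_le.2 hx, or_false]

lemma cdf_min_const_of_le [IsProbabilityMeasure μ] {c x : ℝ} (hx : c ≤ x) :
    cdf μ (fun ω => min (X ω) c) x = 1 := by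
  simp [cdf, hx]

lemma setOf_le_cdf_min_const [IsProbabilityMeasure μ] {z : ℝ} (hz : z ≤ 1) (c : ℝ) :
    {x | z ≤ cdf μ (fun ω => min (X ω) c) x} = {x | z ≤ cdf μ X x} ∪ Ici c := by
  ext x
  rcases lt_or_ge x c with hx | hx
  · simp [cdf_min_const_of_lt hx, not_le.2 hx]
  · simp [cdf_min_const_of_le hx, hx, hz]

theorem qL_min_const [IsProbabilityMeasure μ] (hX : Measurable X) {z : ℝ} (hz : z ∈ Ioo 0 1)
    (c : ℝ) : qL μ (fun ω => min (X ω) c) z = min (qL μ X z) c := by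
  have hbdd := ProbabilityTheory.bddBelow_setOf_le_cdf (μ.map X) hz.1
  have hne := ProbabilityTheory.nonempty_setOf_le_cdf (μ.map X) hz.2
  rw [← cdf_eq_cdf_map hX] at hbdd hne
  rw [qL, setOf_le_cdf_min_const hz.2.le, csInf_union hbdd hne bddBelow_Ici nonempty_Ici, csInf_Ici]
  rfl

end

/-- `min(F_X^{-1}(z), 0) = F_{-X⁻}^{-1}(z)` for `z ∈ (0,1)`, where `X⁻ = max(-X, 0)`. -/
theorem stmt_4 (μ : Measure Ω) [IsProbabilityMeasure μ] (X : Ω → ℝ) (hX : Measurable X)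
    (z : ℝ) (hz : z ∈ Set.Ioo (0 : ℝ) 1) :
    min (qL μ X z) 0 = qL μ (fun ω => -(max (-(X ω)) 0)) z := by
  have hneg : (fun ω => -(max (-(X ω)) 0)) = fun ω => min (X ω) 0 := by
    funext ω
    rw [← neg_zero, max_neg_neg, neg_neg, neg_zero]
  rw [hneg, qL_min_const hX hz]
end

section
/- Let (Ω,F,P) be atomless and A a surplus-invariant, law-invariant, conic, and truncation-closed acceptance set. Then there exists α ∈ [0,1] such that either A^-_α ⊆ A ⊆ A^0_α or A = A^+_α, where A^-_α = {X : P(X<0) < 1-α}, A^0_α = {X : P(X ≤ -ε) < 1-α ∀ε>0}, A^+_α = {X : P(X<0) ≤ 1-α}. -/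
/-!
Let `p*` be the supremum of the probabilities `P(F)` of the events `F` whose unit loss `-𝟙_F`
is acceptable, and `α = 1 - p*`. If `X ∈ A` and `ε > 0`, surplus invariance and conicity make
`-𝟙_{X ≤ -ε}` acceptable, so `P(X ≤ -ε) ≤ p*`. Conversely, if `-𝟙_F ∈ A` and `X` is bounded by `C`
with `P(X < 0) ≤ P(F)`, enlarge `{X < 0}` to an event `E` with `P(E) = P(F)` (possible because the
space is atomless): then `-C 𝟙_E ∈ A` by conicity and law invariance, and `X ∈ A` by surplus
invariance; truncation-closedness removes the boundedness assumption. Whether the supremum `p*`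
is attained decides which alternative of the theorem holds.
-/

open MeasureTheory
open scoped ENNReal

variable {Ω : Type*} [MeasurableSpace Ω]

section UniformVariable

variable {μ : Measure Ω} {U : Ω → ℝ}

lemma measure_preimage_eq_volume_inter (hU : Measurable U)
    (hUd : μ.map U = volume.restrict (Set.Icc (0 : ℝ) 1)) {B : Set ℝ} (hB : MeasurableSet B) :
    μ (U ⁻¹' B) = volume (B ∩ Set.Icc 0 1) := by
  rw [← Measure.map_apply hU hB, hUd, Measure.restrict_apply hB]

lemma measure_inter_preimage_Iic_le_add (hU : Measurable U)
    (hUd : μ.map U = volume.restrict (Set.Icc (0 : ℝ) 1)) (G : Set Ω) (s t : ℝ) :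
    μ (G ∩ U ⁻¹' Set.Iic t) ≤ μ (G ∩ U ⁻¹' Set.Iic s) + ENNReal.ofReal (t - s) := by
  have hsub : G ∩ U ⁻¹' Set.Iic t ⊆ G ∩ U ⁻¹' Set.Iic s ∪ U ⁻¹' Set.Ioc s t := by
    rintro ω ⟨hG, ht⟩
    by_cases hs : U ω ≤ s
    exacts [Or.inl ⟨hG, hs⟩, Or.inr ⟨lt_of_not_ge hs, ht⟩]
  calc μ (G ∩ U ⁻¹' Set.Iic t) ≤ μ (G ∩ U ⁻¹' Set.Iic s) + μ (U ⁻¹' Set.Ioc s t) :=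
        (measure_mono hsub).trans (measure_union_le _ _)
    _ ≤ μ (G ∩ U ⁻¹' Set.Iic s) + ENNReal.ofReal (t - s) := by
        rw [measure_preimage_eq_volume_inter hU hUd measurableSet_Ioc, ← Real.volume_Ioc]
        gcongr
        exact Set.inter_subset_left

lemma lipschitzWith_one_measure_inter_preimage_Iic [IsFiniteMeasure μ] (hU : Measurable U)
    (hUd : μ.map U = volume.restrict (Set.Icc (0 : ℝ) 1)) (G : Set Ω) :
    LipschitzWith 1 fun t => (μ (G ∩ U ⁻¹' Set.Iic t)).toReal := by
  refine LipschitzWith.of_le_add_mul 1 fun t s => ?_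
  calc (μ (G ∩ U ⁻¹' Set.Iic t)).toReal
      ≤ (μ (G ∩ U ⁻¹' Set.Iic s) + ENNReal.ofReal (t - s)).toReal :=
        ENNReal.toReal_mono (by finiteness) (measure_inter_preimage_Iic_le_add hU hUd G s t)
    _ = (μ (G ∩ U ⁻¹' Set.Iic s)).toReal + max (t - s) 0 := by
        rw [ENNReal.toReal_add (measure_ne_top _ _) ENNReal.ofReal_ne_top, ENNReal.toReal_ofReal']
    _ ≤ (μ (G ∩ U ⁻¹' Set.Iic s)).toReal + 1 * dist t s := by
        rw [one_mul, Real.dist_eq]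
        gcongr
        exact max_le (le_abs_self _) (abs_nonneg _)

/-- Atomlessness enters only through `U`: the events `G ∩ {U ≤ t}` grow continuously in `t`
from `∅` (at `t = -1`) to `G` (at `t = 1`, up to a null set). -/
theorem exists_subset_measure_eq_of_uniform [IsFiniteMeasure μ] (hU : Measurable U)
    (hUd : μ.map U = volume.restrict (Set.Icc (0 : ℝ) 1)) {G : Set Ω} (hG : MeasurableSet G)
    {r : ℝ≥0∞} (hr : r ≤ μ G) : ∃ F ⊆ G, MeasurableSet F ∧ μ F = r := by
  set f : ℝ → ℝ := fun t => (μ (G ∩ U ⁻¹' Set.Iic t)).toReal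
  have hf0 : f (-1) = 0 := by
    refine ENNReal.toReal_eq_zero_iff _ |>.2 (Or.inl (measure_mono_null Set.inter_subset_right ?_))
    rw [measure_preimage_eq_volume_inter hU hUd measurableSet_Iic]
    refine measure_mono_null (fun x ⟨h₁, h₂, _⟩ => ?_) measure_empty
    exact absurd (le_trans h₂ h₁) (by norm_num)
  have hf1 : f 1 = (μ G).toReal := by
    refine congrArg ENNReal.toReal (measure_inter_conull ?_)
    rw [← Set.preimage_compl, Set.compl_Iic,
      measure_preimage_eq_volume_inter hU hUd measurableSet_Ioi]
    refine measure_mono_null (fun x ⟨h₁, _, h₂⟩ => ?_) measure_empty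
    exact absurd (lt_of_lt_of_le h₁ h₂) (lt_irrefl 1)
  obtain ⟨t, -, ht⟩ := intermediate_value_Icc (by norm_num : (-1 : ℝ) ≤ 1)
    (lipschitzWith_one_measure_inter_preimage_Iic hU hUd G).continuous.continuousOn
    (⟨hf0 ▸ ENNReal.toReal_nonneg, hf1 ▸ ENNReal.toReal_mono (measure_ne_top _ _) hr⟩ :
      r.toReal ∈ Set.Icc (f (-1)) (f 1))
  refine ⟨G ∩ U ⁻¹' Set.Iic t, Set.inter_subset_left, hG.inter (hU measurableSet_Iic), ?_⟩
  exact (ENNReal.toReal_eq_toReal_iff' (measure_ne_top _ _)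
    (ne_top_of_le_ne_top (measure_ne_top μ G) hr)).1 ht

theorem exists_superset_measure_eq_of_uniform [IsFiniteMeasure μ] (hU : Measurable U)
    (hUd : μ.map U = volume.restrict (Set.Icc (0 : ℝ) 1)) {G : Set Ω} (hG : MeasurableSet G)
    {r : ℝ≥0∞} (hGr : μ G ≤ r) (hr : r ≤ μ Set.univ) :
    ∃ E, G ⊆ E ∧ MeasurableSet E ∧ μ E = r := by
  obtain ⟨F, hFG, hF, hμF⟩ := exists_subset_measure_eq_of_uniform hU hUd hG.compl (r := r - μ G)
    (by rw [measure_compl hG (measure_ne_top _ _)]; exact tsub_le_tsub_right hr _)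
  refine ⟨G ∪ F, Set.subset_union_left, hG.union hF, ?_⟩
  rw [measure_union (disjoint_compl_right.mono_right hFG) hF, hμF, add_tsub_cancel_of_le hGr]

end UniformVariable

theorem map_indicator_const_eq_of_measure_eq {μ : Measure Ω} [IsFiniteMeasure μ] {E E' : Set Ω}
    (hE : MeasurableSet E) (hE' : MeasurableSet E') (h : μ E = μ E') (a : ℝ) :
    μ.map (E.indicator fun _ => a) = μ.map (E'.indicator fun _ => a) := by
  classical
  ext B hB
  rw [Measure.map_apply (measurable_const.indicator hE) hB,
    Measure.map_apply (measurable_const.indicator hE') hB,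
    Set.indicator_const_preimage_eq_union, Set.indicator_const_preimage_eq_union]
  split_ifs <;> simp [measure_compl, hE, hE', h]

theorem measure_lt_zero_le_of_forall_measure_le_neg (μ : Measure Ω) (X : Ω → ℝ) {c : ℝ≥0∞}
    (h : ∀ ε : ℝ, 0 < ε → μ {ω | X ω ≤ -ε} ≤ c) : μ {ω | X ω < 0} ≤ c := by
  have hunion : {ω | X ω < 0} = ⋃ n : ℕ, {ω | X ω ≤ -((n : ℝ) + 1)⁻¹} := by
    ext ω
    simp only [Set.mem_ofPred_eq, Set.mem_iUnion]
    refine ⟨fun hω => ?_, fun ⟨n, hn⟩ => hn.trans_lt (by simp; positivity)⟩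
    obtain ⟨n, hn⟩ := exists_nat_one_div_lt (neg_pos.2 hω)
    exact ⟨n, by rw [one_div] at hn; linarith⟩
  have hmono : Monotone fun n : ℕ => {ω | X ω ≤ -((n : ℝ) + 1)⁻¹} := by
    intro m n hmn ω hω
    have hmn' : (m : ℝ) + 1 ≤ n + 1 := by exact_mod_cast Nat.succ_le_succ hmn
    exact le_trans hω (neg_le_neg (inv_anti₀ (by positivity) hmn'))
  rw [hunion, hmono.measure_iUnion]
  exact iSup_le fun n => h _ (by positivity)

section AcceptanceSet

def SurplusInvariant (μ : Measure Ω) (𝒳 A : Set (Ω → ℝ)) : Prop :=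
  ∀ X ∈ A, ∀ Y ∈ 𝒳, (∀ᵐ ω ∂μ, max (-(Y ω)) 0 ≤ max (-(X ω)) 0) → Y ∈ A

def LawInvariant (μ : Measure Ω) (𝒳 A : Set (Ω → ℝ)) : Prop :=
  ∀ X ∈ A, ∀ Y ∈ 𝒳, μ.map Y = μ.map X → Y ∈ A

def Conic (𝒳 A : Set (Ω → ℝ)) : Prop :=
  ∀ X ∈ A, ∀ c : ℝ, 0 < c → (fun ω => c * X ω) ∈ 𝒳 → (fun ω => c * X ω) ∈ A

def TruncationClosed (𝒳 A : Set (Ω → ℝ)) : Prop :=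
  ∀ X ∈ 𝒳, (∀ d : ℝ, 0 < d → (fun ω => min (max (-d) (X ω)) d) ∈ A) → X ∈ A

def acceptableLossProbs (μ : Measure Ω) (A : Set (Ω → ℝ)) : Set ℝ :=
  {p | ∃ F, MeasurableSet F ∧ F.indicator (fun _ => (-1 : ℝ)) ∈ A ∧ (μ F).toReal = p}

variable {μ : Measure Ω} {𝒳 A : Set (Ω → ℝ)}

lemma indicator_const_mem
    (h𝒳b : ∀ X : Ω → ℝ, Measurable X → (∃ C : ℝ, ∀ ω, |X ω| ≤ C) → X ∈ 𝒳)
    {E : Set Ω} (hE : MeasurableSet E) (a : ℝ) : (E.indicator fun _ => a) ∈ 𝒳 :=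
  h𝒳b _ (measurable_const.indicator hE) ⟨|a|, fun ω => by by_cases hω : ω ∈ E <;> simp [hω]⟩

lemma Conic.const_mul_indicator_mem (hCon : Conic 𝒳 A)
    (h𝒳b : ∀ X : Ω → ℝ, Measurable X → (∃ C : ℝ, ∀ ω, |X ω| ≤ C) → X ∈ 𝒳)
    {E : Set Ω} (hE : MeasurableSet E) {a : ℝ} (ha : (E.indicator fun _ => a) ∈ A)
    {c : ℝ} (hc : 0 < c) : (E.indicator fun _ => c * a) ∈ A := by
  have hmul : (fun ω => c * E.indicator (fun _ => a) ω) = E.indicator fun _ => c * a :=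
    funext fun ω => (Set.indicator_const_mul E (fun _ => a) c ω).symm
  exact hmul ▸ hCon _ ha c hc (hmul ▸ indicator_const_mem h𝒳b hE _)

lemma acceptableLossProbs_subset_Icc [IsProbabilityMeasure μ] :
    acceptableLossProbs μ A ⊆ Set.Icc 0 1 := by
  rintro _ ⟨F, -, -, rfl⟩
  exact ⟨ENNReal.toReal_nonneg, ENNReal.toReal_le_of_le_ofReal zero_le_one (by simp [prob_le_one])⟩

lemma measure_le_neg_mem_acceptableLossProbs (h𝒳m : ∀ X ∈ 𝒳, Measurable X)
    (h𝒳b : ∀ X : Ω → ℝ, Measurable X → (∃ C : ℝ, ∀ ω, |X ω| ≤ C) → X ∈ 𝒳)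
    (hA𝒳 : A ⊆ 𝒳) (hSI : SurplusInvariant μ 𝒳 A) (hCon : Conic 𝒳 A)
    {X : Ω → ℝ} (hX : X ∈ A) {ε : ℝ} (hε : 0 < ε) :
    (μ {ω | X ω ≤ -ε}).toReal ∈ acceptableLossProbs μ A := by
  set F := {ω | X ω ≤ -ε}
  have hF : MeasurableSet F := measurableSet_le (h𝒳m X (hA𝒳 hX)) measurable_const
  have hεF : (F.indicator fun _ => -ε) ∈ A := by
    refine hSI X hX _ (indicator_const_mem h𝒳b hF _) (ae_of_all _ fun ω => ?_)
    by_cases hω : ω ∈ F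
    · have hXω : ε ≤ -X ω := le_neg_of_le_neg hω
      simpa [hω, hε.le] using le_max_of_le_left (c := 0) hXω
    · simp [hω]
  refine ⟨F, hF, ?_, rfl⟩
  simpa [hε.ne'] using hCon.const_mul_indicator_mem h𝒳b hF hεF (inv_pos.2 hε)

lemma mem_of_abs_le_of_measure_neg_le [IsFiniteMeasure μ] {U : Ω → ℝ} (hU : Measurable U)
    (hUd : μ.map U = volume.restrict (Set.Icc (0 : ℝ) 1))
    (h𝒳b : ∀ X : Ω → ℝ, Measurable X → (∃ C : ℝ, ∀ ω, |X ω| ≤ C) → X ∈ 𝒳)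
    (hSI : SurplusInvariant μ 𝒳 A) (hLI : LawInvariant μ 𝒳 A) (hCon : Conic 𝒳 A)
    {p : ℝ} (hp : p ∈ acceptableLossProbs μ A) {X : Ω → ℝ} (hXm : Measurable X)
    {C : ℝ} (hC : 0 < C) (hXC : ∀ ω, |X ω| ≤ C) (hXp : (μ {ω | X ω < 0}).toReal ≤ p) :
    X ∈ A := by
  obtain ⟨F, hF, hFA, rfl⟩ := hp
  obtain ⟨E, hXE, hE, hEF⟩ := exists_superset_measure_eq_of_uniform hU hUd
    (measurableSet_lt hXm measurable_const)
    ((ENNReal.toReal_le_toReal (measure_ne_top _ _) (measure_ne_top _ _)).1 hXp)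
    (measure_mono (Set.subset_univ F))
  have hCF : (F.indicator fun _ => -C) ∈ A := by
    simpa using hCon.const_mul_indicator_mem h𝒳b hF hFA hC
  have hCE : (E.indicator fun _ => -C) ∈ A :=
    hLI _ hCF _ (indicator_const_mem h𝒳b hE _) (map_indicator_const_eq_of_measure_eq hE hF hEF _)
  refine hSI _ hCE X (h𝒳b X hXm ⟨C, hXC⟩) (ae_of_all _ fun ω => ?_)
  by_cases hω : X ω < 0
  · rw [Set.indicator_of_mem (hXE hω), neg_neg]
    exact max_le_max_right 0 (neg_le.1 (abs_le.1 (hXC ω)).1)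
  · exact (max_eq_right (by linarith)).trans_le (le_max_right _ _)

lemma mem_of_measure_neg_le [IsFiniteMeasure μ] {U : Ω → ℝ} (hU : Measurable U)
    (hUd : μ.map U = volume.restrict (Set.Icc (0 : ℝ) 1)) (h𝒳m : ∀ X ∈ 𝒳, Measurable X)
    (h𝒳b : ∀ X : Ω → ℝ, Measurable X → (∃ C : ℝ, ∀ ω, |X ω| ≤ C) → X ∈ 𝒳)
    (hSI : SurplusInvariant μ 𝒳 A) (hLI : LawInvariant μ 𝒳 A) (hCon : Conic 𝒳 A)
    (hTC : TruncationClosed 𝒳 A) {p : ℝ} (hp : p ∈ acceptableLossProbs μ A)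
    {X : Ω → ℝ} (hX : X ∈ 𝒳) (hXp : (μ {ω | X ω < 0}).toReal ≤ p) : X ∈ A := by
  refine hTC X hX fun d hd => mem_of_abs_le_of_measure_neg_le hU hUd h𝒳b hSI hLI hCon hp
    ((measurable_const.max (h𝒳m X hX)).min measurable_const) hd
    (fun ω => abs_le.2 ⟨le_min (le_max_left _ _) (by linarith), min_le_right _ _⟩) ?_
  have htrunc : {ω | min (max (-d) (X ω)) d < 0} = {ω | X ω < 0} := by
    ext ω
    simp [hd, hd.not_gt]
  rwa [htrunc]

end AcceptanceSet

/-- Any surplus-invariant, law-invariant, conic, and truncation-closed acceptance set on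
an atomless probability space (one supporting a uniform random variable `U`) satisfies
`A⁻_α ⊆ A ⊆ A⁰_α` or `A = A⁺_α` for some `α ∈ [0,1]`. -/
theorem stmt_17 (μ : Measure Ω) [IsProbabilityMeasure μ]
    (U : Ω → ℝ) (hU : Measurable U)
    (hUd : μ.map U = volume.restrict (Set.Icc (0 : ℝ) 1))
    (𝒳 A : Set (Ω → ℝ))
    (h𝒳m : ∀ X ∈ 𝒳, Measurable X)
    (h𝒳b : ∀ X : Ω → ℝ, Measurable X → (∃ C : ℝ, ∀ ω, |X ω| ≤ C) → X ∈ 𝒳)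
    (hA𝒳 : A ⊆ 𝒳)
    (hSI : ∀ X ∈ A, ∀ Y ∈ 𝒳,
      (∀ᵐ ω ∂μ, max (-(Y ω)) 0 ≤ max (-(X ω)) 0) → Y ∈ A)
    (hLI : ∀ X ∈ A, ∀ Y ∈ 𝒳, μ.map Y = μ.map X → Y ∈ A)
    (hCon : ∀ X ∈ A, ∀ c : ℝ, 0 < c →
      (fun ω => c * X ω) ∈ 𝒳 → (fun ω => c * X ω) ∈ A)
    (hTC : ∀ X ∈ 𝒳,
      (∀ d : ℝ, 0 < d → (fun ω => min (max (-d) (X ω)) d) ∈ A) → X ∈ A) :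
    ∃ α ∈ Set.Icc (0 : ℝ) 1,
      ({X | X ∈ 𝒳 ∧ (μ {ω | X ω < 0}).toReal < 1 - α} ⊆ A ∧
        A ⊆ {X | X ∈ 𝒳 ∧ ∀ ε : ℝ, 0 < ε → (μ {ω | X ω ≤ -ε}).toReal < 1 - α}) ∨
      A = {X | X ∈ 𝒳 ∧ (μ {ω | X ω < 0}).toReal ≤ 1 - α} := by
  set S := acceptableLossProbs μ A
  have hS : S ⊆ Set.Icc 0 1 := acceptableLossProbs_subset_Icc
  have hSbdd : BddAbove S := ⟨1, fun p hp => (hS hp).2⟩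
  have hsup_nonneg : 0 ≤ sSup S := Real.sSup_nonneg fun p hp => (hS hp).1
  have hlevel : ∀ X ∈ A, ∀ ε : ℝ, 0 < ε → (μ {ω | X ω ≤ -ε}).toReal ∈ S :=
    fun X hX ε hε => measure_le_neg_mem_acceptableLossProbs h𝒳m h𝒳b hA𝒳 hSI hCon hX hε
  have haccept : ∀ p ∈ S, ∀ X ∈ 𝒳, (μ {ω | X ω < 0}).toReal ≤ p → X ∈ A :=
    fun p hp X hX => mem_of_measure_neg_le hU hUd h𝒳m h𝒳b hSI hLI hCon hTC hp hX
  refine ⟨1 - sSup S, ⟨sub_nonneg.2 (Real.sSup_le (fun p hp => (hS hp).2) zero_le_one),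
    sub_le_self _ hsup_nonneg⟩, ?_⟩
  rw [sub_sub_cancel]
  by_cases hmax : sSup S ∈ S
  · refine Or.inr (Set.ext fun X =>
      ⟨fun hX => ⟨hA𝒳 hX, ?_⟩, fun ⟨hX, hXp⟩ => haccept _ hmax X hX hXp⟩)
    refine ENNReal.toReal_le_of_le_ofReal hsup_nonneg (measure_lt_zero_le_of_forall_measure_le_neg μ X
      fun ε hε => ?_)
    exact (ENNReal.le_ofReal_iff_toReal_le (measure_ne_top _ _) hsup_nonneg).2
      (le_csSup hSbdd (hlevel X hX ε hε))
  · refine Or.inl ⟨fun X ⟨hX, hXp⟩ => ?_, fun X hX => ⟨hA𝒳 hX, fun ε hε => ?_⟩⟩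
    · have hSne : S.Nonempty := S.eq_empty_or_nonempty.resolve_left fun hempty => by
        rw [hempty, Real.sSup_empty] at hXp
        exact hXp.not_ge ENNReal.toReal_nonneg
      obtain ⟨p, hp, hXp'⟩ := exists_lt_of_lt_csSup hSne hXp
      exact haccept p hp X hX hXp'.le
    · exact (le_csSup hSbdd (hlevel X hX ε hε)).lt_of_ne fun h => hmax (h ▸ hlevel X hX ε hε)
end
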